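/- For the learning rate sequence α_t = (H+1)/(H+t) with H ≥ 1 and weights α_t^i := α_i ∏_{j=i+1}^t (1-α_j), for every t ≥ 1, the maximum over i ∈ {1,…,t} of α_t^i is at most 2H/t. -/

import Mathlib

/-- Learning rate `α_t = (H+1)/(H+t)`. -/
noncomputable def lr (H t : ℕ) : ℝ := (H + 1) / (H + t)

/-- Weight `α_t^i = α_i ∏_{j=i+1}^t (1 - α_j)`. -/
noncomputable def lrW (H t i : ℕ) : ℝ :=
  lr H i * ∏ j ∈ Finset.Icc (i + 1) t, (1 - lr H j)

/-! Since `1 - α_{t+1} = t / (H+t+1)` and `t ≤ H + t`, each step `t → t+1` turns the bound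
`α_t^i ≤ (H+1)/(H+t)` into the same bound at `t+1`; it is an equality at `t = i`. For `H ≥ 1`,
`(H+1)/(H+t) ≤ 2H/t`. -/

lemma one_sub_lr_succ (H n : ℕ) : 1 - lr H (n + 1) = n / (H + n + 1) := by
  unfold lr
  field_simp
  push_cast
  ring

lemma lrW_self (H i : ℕ) : lrW H i i = lr H i := by
  simp [lrW]

lemma lrW_succ (H : ℕ) {i t : ℕ} (hit : i ≤ t) :
    lrW H (t + 1) i = lrW H t i * (1 - lr H (t + 1)) := by
  rw [lrW, lrW, Finset.prod_Icc_succ_top (by omega), mul_assoc]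

lemma lrW_le (H : ℕ) {i t : ℕ} (hit : i ≤ t) : lrW H t i ≤ (H + 1) / (H + t) := by
  induction t, hit using Nat.le_induction with
  | base => rw [lrW_self, lr]
  | succ t hit ih =>
    have hfactor : (t : ℝ) / (H + t) ≤ 1 := div_le_one_of_le₀ (by linarith) (by positivity)
    rw [lrW_succ H hit, one_sub_lr_succ]
    calc lrW H t i * (t / (H + t + 1))
        ≤ (H + 1) / (H + t) * (t / (H + t + 1)) := by gcongr
      _ = (H + 1) * (t / (H + t)) / (H + t + 1) := by ring
      _ ≤ (H + 1) * 1 / (H + t + 1) := by gcongr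
      _ = (H + 1) / (H + ↑(t + 1)) := by push_cast; ring

theorem stmt2_general (H : ℕ) (hH : 1 ≤ H) (t : ℕ) :
    ∀ i ∈ Finset.Icc 1 t, lrW H t i ≤ 2 * (H : ℝ) / t := by
  intro i hi
  obtain ⟨hi1, hit⟩ := Finset.mem_Icc.mp hi
  have hH' : (1 : ℝ) ≤ H := by exact_mod_cast hH
  have ht' : (1 : ℝ) ≤ t := by exact_mod_cast hi1.trans hit
  refine (lrW_le H hit).trans ?_
  rw [div_le_div_iff₀ (by positivity) (by positivity)]
  nlinarith

theorem stmt2 (H : ℕ) (hH : 1 ≤ H) (t : ℕ) (ht : 1 ≤ t) :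
    ∀ i ∈ Finset.Icc 1 t, lrW H t i ≤ 2 * (H : ℝ) / t :=
  stmt2_general H hH t
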